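/- Let p be an odd prime with p ≡ 3 (mod 4), m = 2s with s an odd positive integer and gcd(m,p) = 1, q = p^m, d = (q−1)/(p+1), and D = {x ∈ F_q^* : Tr_{q/p}(x^d) = 0}. Then |D| = 2(q−1)/(p+1) and the code C_D has dimension m over F_p. -/

import Mathlib

/-!
Since `(p + 1) d = q - 1`, for `x ≠ 0` the element `u = x ^ d` is a `(p + 1)`-st root of unity,
so `u ^ p = u⁻¹` and `u ^ (p ^ 2) = u`. Summing the Frobenius conjugates over `m = 2 s` terms
gives `Tr(u) = s (u + u⁻¹)`, and `p ∤ s`, so `Tr(u) = 0` iff `u ^ 2 = -1`. Hence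
`D = {x | x ^ (2 d) = -1}`, which has `2 d` elements because `p ≡ 3 (mod 4)` makes `4 d ∣ q - 1`.
If `Tr(a x) = 0` for all `x ∈ D` with `a ≠ 0`, then `a D` lies among the `p ^ (m - 1) - 1`
nonzero elements of `ker Tr`, contradicting `2 d ≥ p ^ (m - 1)`; so `a ↦ (Tr(a x))_{x ∈ D}`
is injective and `C_D` has dimension `m`.
-/

open scoped Classical

/-- The linear code `C_D = {(Tr_{q/p}(a d))_{d ∈ D} : a ∈ F_q}` over `F_p`
with defining set `D ⊆ F_q`, with coordinates indexed by the elements of `D`. -/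
noncomputable def codeD (p : ℕ) (F : Type*) [Field F] [Fintype F] [Algebra (ZMod p) F]
    (D : Finset F) : Submodule (ZMod p) (D → ZMod p) :=
  LinearMap.range (LinearMap.pi fun x : D =>
    (Algebra.trace (ZMod p) F).comp (LinearMap.mulRight (ZMod p) (x : F)))

open Finset Module

theorem Nat.add_one_dvd_pow_two_mul_sub_one (p s : ℕ) : p + 1 ∣ p ^ (2 * s) - 1 := by
  have hsq : p + 1 ∣ p ^ 2 - 1 := ⟨p - 1, by simpa using Nat.sq_sub_sq p 1⟩
  simpa [pow_mul] using hsq.trans (Nat.sub_dvd_pow_sub_pow (p ^ 2) 1 s)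

theorem Nat.pow_pred_le_two_mul_of_add_one_mul_eq {p m d : ℕ} (hp : 3 ≤ p) (hm : 0 < m)
    (hd : (p + 1) * d = p ^ m - 1) : p ^ (m - 1) ≤ 2 * d := by
  have hpow : p ^ m = p * p ^ (m - 1) := by rw [← pow_succ']; congr 1; omega
  have hpos : 0 < p ^ (m - 1) := by positivity
  have hd' : (p + 1) * d + 1 = p * p ^ (m - 1) := by
    have : 0 < p ^ m := by positivity
    omega
  nlinarith [Nat.mul_le_mul_right (p ^ (m - 1)) hp]

namespace FiniteField

section RootsOfUnity

variable {F : Type*} [Field F] [Fintype F]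

theorem exists_isPrimitiveRoot_of_dvd {N : ℕ} (hN : N ∣ Fintype.card F - 1) :
    ∃ ζ : F, IsPrimitiveRoot ζ N := by
  obtain ⟨g, hg⟩ := IsCyclic.exists_ofOrder_eq_natCard (α := Fˣ)
  rw [Nat.card_eq_fintype_card, Fintype.card_units] at hg
  obtain ⟨k, hk⟩ := hN
  have hgen : IsPrimitiveRoot (g : F) (Fintype.card F - 1) :=
    IsPrimitiveRoot.coe_units_iff.mpr (hg ▸ IsPrimitiveRoot.orderOf g)
  exact ⟨_, hgen.pow (Nat.sub_pos_of_lt Fintype.one_lt_card) (hk.trans (mul_comm N k))⟩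

theorem card_filter_pow_eq_one {N : ℕ} (hN0 : 0 < N) (hN : N ∣ Fintype.card F - 1) :
    #{x : F | x ^ N = 1} = N := by
  obtain ⟨ζ, hζ⟩ := exists_isPrimitiveRoot_of_dvd hN
  have hroots : ({x : F | x ^ N = 1} : Finset F) = Polynomial.nthRootsFinset N (1 : F) := by
    ext x
    simp [Polynomial.mem_nthRootsFinset hN0]
  rw [hroots, hζ.card_nthRootsFinset]

theorem card_filter_pow_eq_neg_one (hF : ringChar F ≠ 2) {N : ℕ} (hN0 : 0 < N)
    (hN : 2 * N ∣ Fintype.card F - 1) : #{x : F | x ^ N = -1} = N := by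
  have hsplit : ({x : F | x ^ N = -1} : Finset F) =
      ({x | x ^ (2 * N) = 1} : Finset F) \ ({x | x ^ N = 1} : Finset F) := by
    ext x
    simp only [mem_filter, mem_sdiff, mem_univ, true_and, pow_mul', sq_eq_one_iff]
    have hne := Ring.neg_one_ne_one_of_char_ne_two hF
    constructor
    · intro h; simp [h, hne]
    · rintro ⟨h1 | h1, h2⟩ <;> tauto
  have hsub : ({x : F | x ^ N = 1} : Finset F) ⊆ ({x | x ^ (2 * N) = 1} : Finset F) := by
    intro x
    simp +contextual [pow_mul']
  rw [hsplit, card_sdiff_of_subset hsub, card_filter_pow_eq_one (by omega) hN,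
    card_filter_pow_eq_one hN0 (dvd_of_mul_left_dvd hN)]
  omega

end RootsOfUnity

section Trace

variable {K L : Type*} [Field K] [Fintype K] [Field L] [Fintype L] [Algebra K L]

theorem card_filter_trace_eq_zero :
    #{y : L | Algebra.trace K L y = 0} = Fintype.card K ^ (finrank K L - 1) := by
  have hrk := LinearMap.finrank_range_add_finrank_ker (Algebra.trace K L)
  rw [LinearMap.range_eq_top.mpr (Algebra.trace_surjective K L), finrank_top,
    finrank_self] at hrk
  calc #{y : L | Algebra.trace K L y = 0} = Nat.card (LinearMap.ker (Algebra.trace K L)) := by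
        rw [← Fintype.card_subtype, Nat.card_eq_fintype_card]; rfl
    _ = Fintype.card K ^ (finrank K L - 1) := by
        rw [natCard_eq_pow_finrank (K := K), Nat.card_eq_fintype_card]; congr 1; omega

theorem algebraMap_trace_eq_nsmul_of_pow_card_sq {s : ℕ} (hs : finrank K L = 2 * s) {u : L}
    (hu : u ^ (Fintype.card K ^ 2) = u) :
    algebraMap K L (Algebra.trace K L u) = s • (u + u ^ Fintype.card K) := by
  set r := Fintype.card K
  have hfix : ∀ j, u ^ r ^ (2 * j) = u := by
    intro j
    induction j with
    | zero => simp
    | succ j ih => rw [Nat.mul_succ, pow_add, pow_mul, ih, hu]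
  have hsum : ∀ n, ∑ i ∈ range (2 * n), u ^ r ^ i = n • (u + u ^ r) := by
    intro n
    induction n with
    | zero => simp
    | succ n ih =>
      rw [Nat.mul_succ, sum_range_succ, sum_range_succ, ih, hfix, pow_succ, pow_mul, hfix,
        succ_nsmul, add_assoc]
  rw [algebraMap_trace_eq_sum_pow, hs, Nat.card_eq_fintype_card, hsum]

theorem trace_eq_zero_iff_sq_eq_neg_one {s : ℕ} (hs : finrank K L = 2 * s) (hs0 : (s : L) ≠ 0)
    {u : L} (hu : u ^ (Fintype.card K + 1) = 1) :
    Algebra.trace K L u = 0 ↔ u ^ 2 = -1 := by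
  set r := Fintype.card K
  have hu0 : u ≠ 0 := by rintro rfl; simp at hu
  have hinv : u ^ r = u⁻¹ := eq_inv_of_mul_eq_one_left (by rw [← pow_succ, hu])
  have hfix : u ^ (r ^ 2) = u := by rw [sq, pow_mul, hinv, inv_pow, hinv, inv_inv]
  rw [← (algebraMap K L).injective.eq_iff, map_zero,
    algebraMap_trace_eq_nsmul_of_pow_card_sq hs hfix, nsmul_eq_mul, mul_eq_zero,
    or_iff_right hs0, hinv]
  constructor <;> intro h
  · field_simp at h; linear_combination h
  · field_simp; linear_combination h

theorem ne_zero_and_trace_pow_eq_zero_iff {s d : ℕ} (hs : finrank K L = 2 * s)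
    (hs0 : (s : L) ≠ 0) (hd : (Fintype.card K + 1) * d = Fintype.card L - 1) {x : L} :
    x ≠ 0 ∧ Algebra.trace K L (x ^ d) = 0 ↔ x ^ (2 * d) = -1 := by
  have hd0 : d ≠ 0 := by
    rintro rfl
    have := Fintype.one_lt_card (α := L)
    omega
  have hroot : ∀ x : L, x ≠ 0 → (x ^ d) ^ (Fintype.card K + 1) = 1 := fun x hx => by
    rw [← pow_mul, mul_comm, hd, pow_card_sub_one_eq_one x hx]
  rw [mul_comm, pow_mul]
  constructor
  · rintro ⟨hx, htr⟩
    exact (trace_eq_zero_iff_sq_eq_neg_one hs hs0 (hroot x hx)).mp htr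
  · intro h
    have hx : x ≠ 0 := by
      rintro rfl
      rw [zero_pow hd0, sq, zero_mul] at h
      exact one_ne_zero (neg_eq_zero.mp h.symm)
    exact ⟨hx, (trace_eq_zero_iff_sq_eq_neg_one hs hs0 (hroot x hx)).mpr h⟩

theorem injective_pi_trace_mulRight {D : Finset L} (h0 : 0 ∉ D)
    (hcard : Fintype.card K ^ (finrank K L - 1) ≤ #D) :
    Function.Injective (LinearMap.pi fun x : D =>
      (Algebra.trace K L).comp (LinearMap.mulRight K (x : L))) := by
  rw [← LinearMap.ker_eq_bot, Submodule.eq_bot_iff]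
  intro a ha
  by_contra ha0
  have hmaps : Set.MapsTo (a * ·) D (({y | Algebra.trace K L y = 0} : Finset L).erase 0) := by
    intro x hx
    have htr := congrFun ha ⟨x, hx⟩
    simp only [mem_coe, mem_erase, mem_filter, mem_univ, true_and]
    exact ⟨mul_ne_zero ha0 (ne_of_mem_of_not_mem hx h0), by simpa using htr⟩
  have hle := card_le_card_of_injOn _ hmaps (mul_right_injective₀ ha0).injOn
  rw [card_erase_of_mem (by simp), card_filter_trace_eq_zero] at hle
  have : 0 < Fintype.card K ^ (finrank K L - 1) := by positivity
  omega

end Trace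

end FiniteField

theorem card_D_and_dim_codeD_p_three_mod_four_general
    (p m s : ℕ) (hp : p.Prime) (h4 : p % 4 = 3)
    (hm : m = 2 * s) (hmp : Nat.gcd m p = 1)
    (q d : ℕ) (hq : q = p ^ m) (hd : d = (q - 1) / (p + 1))
    (F : Type*) [Field F] [Fintype F] [Algebra (ZMod p) F]
    (hF : Fintype.card F = q)
    (D : Finset F)
    (hD : D = Finset.univ.filter fun x : F =>
      x ≠ 0 ∧ Algebra.trace (ZMod p) F (x ^ d) = 0) :
    D.card = 2 * (q - 1) / (p + 1) ∧ Module.finrank (ZMod p) (codeD p F D) = m := by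
  have := Fact.mk hp
  have : CharP F p := (Algebra.charP_iff (ZMod p) F p).mp (ZMod.charP p)
  have hrank : finrank (ZMod p) F = m := by
    have hc := card_eq_pow_finrank (K := ZMod p) (V := F)
    rw [ZMod.card, hF, hq] at hc
    exact Nat.pow_right_injective hp.two_le hc.symm
  have hdq : (p + 1) * d = q - 1 := by
    rw [hd, hq, hm]; exact Nat.mul_div_cancel' (Nat.add_one_dvd_pow_two_mul_sub_one p s)
  have h4d : 2 * (2 * d) ∣ Fintype.card F - 1 := by
    obtain ⟨k, hk⟩ : 4 ∣ p + 1 := by omega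
    exact ⟨k, by rw [hF, ← hdq, hk]; ring⟩
  have hs : (s : F) ≠ 0 := by
    rw [Ne, CharP.cast_eq_zero_iff F p]
    exact hp.coprime_iff_not_dvd.mp
      (Nat.Coprime.coprime_dvd_left (hm ▸ dvd_mul_left s 2) hmp).symm
  have hDeq : D = ({x : F | x ^ (2 * d) = -1} : Finset F) := by
    rw [hD]
    ext x
    simp only [mem_filter, mem_univ, true_and]
    exact FiniteField.ne_zero_and_trace_pow_eq_zero_iff (hrank.trans hm) hs
      (by rw [ZMod.card, hF, hdq])
  have hm0 : 0 < m := hrank ▸ finrank_pos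
  have hd0 : 0 < d := by
    have := Fintype.one_lt_card (α := F)
    exact Nat.pos_of_ne_zero (by rintro rfl; omega)
  have hcard : #D = 2 * d := by
    rw [hDeq]
    exact FiniteField.card_filter_pow_eq_neg_one (by rw [ringChar.eq F p]; omega) (by omega) h4d
  refine ⟨by rw [hcard, ← hdq, mul_left_comm, Nat.mul_div_cancel_left _ (Nat.succ_pos p)], ?_⟩
  refine (LinearMap.finrank_range_of_inj
    (FiniteField.injective_pi_trace_mulRight ?_ ?_)).trans hrank
  · simp [hD]
  · rw [hcard, ZMod.card, hrank]
    exact Nat.pow_pred_le_two_mul_of_add_one_mul_eq (by omega) hm0 (hq ▸ hdq)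

/-- for `p ≡ 3 (mod 4)`, `m = 2s` with `s` odd, `gcd(m,p) = 1`,
`q = p^m`, `d = (q-1)/(p+1)` and `D = {x ∈ F_q^* : Tr_{q/p}(x^d) = 0}`,
we have `|D| = 2(q-1)/(p+1)` and `dim_{F_p} C_D = m`. -/
theorem card_D_and_dim_codeD_p_three_mod_four
    (p m s : ℕ) (hp : p.Prime) (hodd : Odd p) (h4 : p % 4 = 3)
    (hm : m = 2 * s) (hs : Odd s) (hs0 : 0 < s) (hmp : Nat.gcd m p = 1)
    (q d : ℕ) (hq : q = p ^ m) (hd : d = (q - 1) / (p + 1))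
    (F : Type*) [Field F] [Fintype F] [Algebra (ZMod p) F]
    (hF : Fintype.card F = q)
    (D : Finset F)
    (hD : D = Finset.univ.filter fun x : F =>
      x ≠ 0 ∧ Algebra.trace (ZMod p) F (x ^ d) = 0) :
    D.card = 2 * (q - 1) / (p + 1) ∧ Module.finrank (ZMod p) (codeD p F D) = m :=
  card_D_and_dim_codeD_p_three_mod_four_general p m s hp h4 hm hmp q d hq hd F hF D hD
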